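/- Let n ≥ 1, T > 0, and let u, v : ℝ^n × [0,T] → ℝ be bounded and ℤ^n-periodic in the space variable. Fix ε, σ, γ > 0 and λ > 0, and define ℓ(ζ) := sup { Φ_ζ(x,t,y,s) : x, y ∈ ℝ^n, t, s ∈ [0,T) }. Assume that ℓ(ζ) = ℓ(0) for every ζ ∈ ℝ^n with ‖ζ‖ ≤ λ, and that there exist x̂ ∈ ℝ^n and t̂, ŝ ∈ [0,T) with Φ_0(x̂, t̂, x̂, ŝ) = ℓ(0). Then for all t, s ∈ [0,T) and all x, y ∈ ℝ^n with d(x − y) ≤ λ one has u(x,t) − v(y,s) − S(t,s) ≤ u(x̂,t̂) − v(x̂,ŝ) − S(t̂,ŝ). -/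

import Mathlib

noncomputable section

/-- The vector in `ℝⁿ` with integer coordinates `k`. -/
def intVec (n : ℕ) (k : Fin n → ℤ) : EuclideanSpace ℝ (Fin n) :=
  WithLp.toLp 2 (fun i => (k i : ℝ))

/-- Torus distance: `d(x) := inf_{k ∈ ℤⁿ} ‖x + k‖`. -/
def torusDist (n : ℕ) (x : EuclideanSpace ℝ (Fin n)) : ℝ :=
  ⨅ k : Fin n → ℤ, ‖x + intVec n k‖

/-- `S(t,s) := |t-s|²/(2σ) + γ/(T-t) + γ/(T-s)`. -/
def Sfun (T σ γ t s : ℝ) : ℝ :=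
  |t - s| ^ 2 / (2 * σ) + γ / (T - t) + γ / (T - s)

/-- `Φ_ζ(x,t,y,s) := u(x,t) - v(y,s) - d(x-y-ζ)²/(2ε) - S(t,s)`. -/
def Phi (n : ℕ) (u v : EuclideanSpace ℝ (Fin n) × ℝ → ℝ) (T ε σ γ : ℝ)
    (ζ x : EuclideanSpace ℝ (Fin n)) (t : ℝ) (y : EuclideanSpace ℝ (Fin n)) (s : ℝ) : ℝ :=
  u (x, t) - v (y, s) - torusDist n (x - y - ζ) ^ 2 / (2 * ε) - Sfun T σ γ t s

/-- `ℓ(ζ) := sup { Φ_ζ(x,t,y,s) : x, y ∈ ℝⁿ, t, s ∈ [0,T) }`. -/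
def ell (n : ℕ) (u v : EuclideanSpace ℝ (Fin n) × ℝ → ℝ) (T ε σ γ : ℝ)
    (ζ : EuclideanSpace ℝ (Fin n)) : ℝ :=
  sSup {r : ℝ | ∃ x y : EuclideanSpace ℝ (Fin n), ∃ t ∈ Set.Ico (0 : ℝ) T,
    ∃ s ∈ Set.Ico (0 : ℝ) T, r = Phi n u v T ε σ γ ζ x t y s}

/-! Shifting the penalty by any `ζ` with `‖ζ‖ ≤ λ` does not raise the supremum above
`ℓ(0) = Φ₀(x̂, t̂, x̂, ŝ)`. Given `x, y` with `d(x - y) ≤ λ`, one can choose such a `ζ` with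
`d(x - y - ζ)` arbitrarily small (project a near-minimising lattice translate of `x - y` onto the
ball of radius `λ`), so `u(x,t) - v(y,s) - S(t,s)` exceeds `Φ₀(x̂, t̂, x̂, ŝ)` by arbitrarily little. -/

open Filter Topology

lemma torusDist_nonneg (n : ℕ) (x : EuclideanSpace ℝ (Fin n)) : 0 ≤ torusDist n x :=
  Real.iInf_nonneg fun _ => norm_nonneg _

lemma torusDist_le (n : ℕ) (x : EuclideanSpace ℝ (Fin n)) (k : Fin n → ℤ) :
    torusDist n x ≤ ‖x + intVec n k‖ :=
  ciInf_le ⟨0, by rintro r ⟨k, rfl⟩; exact norm_nonneg _⟩ k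

lemma intVec_zero (n : ℕ) : intVec n 0 = 0 := by
  ext i; simp [intVec]

lemma torusDist_zero (n : ℕ) : torusDist n 0 = 0 :=
  le_antisymm (by simpa [intVec_zero] using torusDist_le n 0 0) (torusDist_nonneg n 0)

lemma exists_norm_le_norm_sub_lt {E : Type*} [NormedAddCommGroup E] [NormedSpace ℝ E]
    {w : E} {r δ : ℝ} (hr : 0 ≤ r) (hδ : 0 < δ) (hw : ‖w‖ < r + δ) :
    ∃ ζ : E, ‖ζ‖ ≤ r ∧ ‖w - ζ‖ < δ := by
  rcases le_or_gt ‖w‖ r with hwr | hwr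
  · exact ⟨w, hwr, by simpa using hδ⟩
  have hw0 : 0 < ‖w‖ := hr.trans_lt hwr
  have hc : 0 ≤ 1 - r / ‖w‖ := sub_nonneg.2 ((div_le_one hw0).2 hwr.le)
  refine ⟨(r / ‖w‖) • w, ?_, ?_⟩
  · rw [norm_smul, Real.norm_of_nonneg (by positivity), div_mul_cancel₀ _ hw0.ne']
  · calc ‖w - (r / ‖w‖) • w‖ = (1 - r / ‖w‖) * ‖w‖ := by
          rw [← norm_smul_of_nonneg hc, sub_smul, one_smul]
      _ = ‖w‖ - r := by rw [sub_mul, one_mul, div_mul_cancel₀ _ hw0.ne']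
      _ < δ := by linarith

lemma exists_norm_le_torusDist_sub_lt {n : ℕ} {x : EuclideanSpace ℝ (Fin n)} {r δ : ℝ}
    (hx : torusDist n x ≤ r) (hδ : 0 < δ) :
    ∃ ζ : EuclideanSpace ℝ (Fin n), ‖ζ‖ ≤ r ∧ torusDist n (x - ζ) < δ := by
  obtain ⟨k, hk⟩ := exists_lt_of_ciInf_lt (show torusDist n x < r + δ by linarith)
  obtain ⟨ζ, hζ, hxζ⟩ :=
    exists_norm_le_norm_sub_lt ((torusDist_nonneg n x).trans hx) hδ hk
  refine ⟨ζ, hζ, (torusDist_le n (x - ζ) k).trans_lt ?_⟩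
  rwa [sub_add_eq_add_sub]

lemma Sfun_nonneg {T σ γ t s : ℝ} (hσ : 0 ≤ σ) (hγ : 0 ≤ γ) (ht : t < T) (hs : s < T) :
    0 ≤ Sfun T σ γ t s := by
  have hT_t : 0 ≤ T - t := by linarith
  have hT_s : 0 ≤ T - s := by linarith
  unfold Sfun; positivity

lemma Phi_le_ell {n : ℕ} {u v : EuclideanSpace ℝ (Fin n) × ℝ → ℝ} {T ε σ γ Cu Cv : ℝ}
    (hu : ∀ x, ∀ t ∈ Set.Ico (0 : ℝ) T, u (x, t) ≤ Cu)
    (hv : ∀ y, ∀ s ∈ Set.Ico (0 : ℝ) T, Cv ≤ v (y, s))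
    (hε : 0 ≤ ε) (hσ : 0 ≤ σ) (hγ : 0 ≤ γ) (ζ x y : EuclideanSpace ℝ (Fin n))
    {t s : ℝ} (ht : t ∈ Set.Ico (0 : ℝ) T) (hs : s ∈ Set.Ico (0 : ℝ) T) :
    Phi n u v T ε σ γ ζ x t y s ≤ ell n u v T ε σ γ ζ := by
  refine le_csSup ⟨Cu - Cv, ?_⟩ ⟨x, y, t, ht, s, hs, rfl⟩
  rintro _ ⟨x, y, t, ht, s, hs, rfl⟩
  have hpen : 0 ≤ torusDist n (x - y - ζ) ^ 2 / (2 * ε) := by positivity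
  rw [Phi]
  linarith [hu x t ht, hv y s hs, Sfun_nonneg hσ hγ ht.2 hs.2]

lemma Phi_zero_diag (n : ℕ) (u v : EuclideanSpace ℝ (Fin n) × ℝ → ℝ) (T ε σ γ : ℝ)
    (x : EuclideanSpace ℝ (Fin n)) (t s : ℝ) :
    Phi n u v T ε σ γ 0 x t x s = u (x, t) - v (x, s) - Sfun T σ γ t s := by
  simp [Phi, torusDist_zero]

lemma le_of_forall_pos_le_add_sq_div {a b c : ℝ} (h : ∀ δ > 0, a ≤ b + δ ^ 2 / c) : a ≤ b := by
  have hlim : Tendsto (fun δ : ℝ => b + δ ^ 2 / c) (𝓝[>] 0) (𝓝 b) := by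
    have : Continuous (fun δ : ℝ => b + δ ^ 2 / c) := by fun_prop
    simpa using (this.tendsto 0).mono_left nhdsWithin_le_nhds
  exact ge_of_tendsto hlim (eventually_nhdsWithin_of_forall h)

theorem order_in_doubling_general (n : ℕ) (T : ℝ)
    (u v : EuclideanSpace ℝ (Fin n) × ℝ → ℝ)
    (hub : ∃ C : ℝ, ∀ x : EuclideanSpace ℝ (Fin n), ∀ t ∈ Set.Icc (0 : ℝ) T, |u (x, t)| ≤ C)
    (hvb : ∃ C : ℝ, ∀ x : EuclideanSpace ℝ (Fin n), ∀ t ∈ Set.Icc (0 : ℝ) T, |v (x, t)| ≤ C)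
    (ε σ γ lam : ℝ) (hε : 0 < ε) (hσ : 0 < σ) (hγ : 0 < γ)
    (hconst : ∀ ζ : EuclideanSpace ℝ (Fin n), ‖ζ‖ ≤ lam →
      ell n u v T ε σ γ ζ = ell n u v T ε σ γ 0)
    (xhat : EuclideanSpace ℝ (Fin n)) (that shat : ℝ)
    (hmax : Phi n u v T ε σ γ 0 xhat that xhat shat = ell n u v T ε σ γ 0) :
    ∀ t ∈ Set.Ico (0 : ℝ) T, ∀ s ∈ Set.Ico (0 : ℝ) T,
      ∀ x y : EuclideanSpace ℝ (Fin n), torusDist n (x - y) ≤ lam →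
        u (x, t) - v (y, s) - Sfun T σ γ t s ≤
          u (xhat, that) - v (xhat, shat) - Sfun T σ γ that shat := by
  obtain ⟨Cu, hCu⟩ := hub
  obtain ⟨Cv, hCv⟩ := hvb
  have hu : ∀ x, ∀ t ∈ Set.Ico (0 : ℝ) T, u (x, t) ≤ Cu := fun x t ht =>
    (abs_le.1 (hCu x t (Set.Ico_subset_Icc_self ht))).2
  have hv : ∀ y, ∀ s ∈ Set.Ico (0 : ℝ) T, -Cv ≤ v (y, s) := fun y s hs =>
    (abs_le.1 (hCv y s (Set.Ico_subset_Icc_self hs))).1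
  intro t ht s hs x y hxy
  refine le_of_forall_pos_le_add_sq_div (c := 2 * ε) fun δ hδ => ?_
  obtain ⟨ζ, hζ, hxyζ⟩ := exists_norm_le_torusDist_sub_lt hxy hδ
  have hΦ := Phi_le_ell hu hv hε.le hσ.le hγ.le ζ x y ht hs
  rw [hconst ζ hζ, ← hmax, Phi_zero_diag, Phi] at hΦ
  have hpen : torusDist n (x - y - ζ) ^ 2 / (2 * ε) ≤ δ ^ 2 / (2 * ε) := by
    gcongr; exact torusDist_nonneg n _
  linarith

/-- Ordering at a diagonal maximizer of `Φ₀` when `ℓ` is constant for small shifts. -/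
theorem order_in_doubling (n : ℕ) (hn : 1 ≤ n) (T : ℝ) (hT : 0 < T)
    (u v : EuclideanSpace ℝ (Fin n) × ℝ → ℝ)
    (hub : ∃ C : ℝ, ∀ x : EuclideanSpace ℝ (Fin n), ∀ t ∈ Set.Icc (0 : ℝ) T, |u (x, t)| ≤ C)
    (hvb : ∃ C : ℝ, ∀ x : EuclideanSpace ℝ (Fin n), ∀ t ∈ Set.Icc (0 : ℝ) T, |v (x, t)| ≤ C)
    (huper : ∀ (x : EuclideanSpace ℝ (Fin n)) (k : Fin n → ℤ) (t : ℝ),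
      u (x + intVec n k, t) = u (x, t))
    (hvper : ∀ (x : EuclideanSpace ℝ (Fin n)) (k : Fin n → ℤ) (t : ℝ),
      v (x + intVec n k, t) = v (x, t))
    (ε σ γ lam : ℝ) (hε : 0 < ε) (hσ : 0 < σ) (hγ : 0 < γ) (hlam : 0 < lam)
    (hconst : ∀ ζ : EuclideanSpace ℝ (Fin n), ‖ζ‖ ≤ lam →
      ell n u v T ε σ γ ζ = ell n u v T ε σ γ 0)
    (xhat : EuclideanSpace ℝ (Fin n)) (that shat : ℝ)
    (hthat : that ∈ Set.Ico (0 : ℝ) T) (hshat : shat ∈ Set.Ico (0 : ℝ) T)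
    (hmax : Phi n u v T ε σ γ 0 xhat that xhat shat = ell n u v T ε σ γ 0) :
    ∀ t ∈ Set.Ico (0 : ℝ) T, ∀ s ∈ Set.Ico (0 : ℝ) T,
      ∀ x y : EuclideanSpace ℝ (Fin n), torusDist n (x - y) ≤ lam →
        u (x, t) - v (y, s) - Sfun T σ γ t s ≤
          u (xhat, that) - v (xhat, shat) - Sfun T σ γ that shat :=
  order_in_doubling_general n T u v hub hvb ε σ γ lam hε hσ hγ hconst xhat that shat hmax
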